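/- arXiv:1002.4332 — 2 statements merged into one kernel-verified Lean document; each statement's English description precedes it below -/
import Mathlib

section
/- Let G be a finite simple graph with f(G) ≥ 3. Then |V(G)| ≥ χ(G) + 6. -/
open SimpleGraph

/-- The chromatic number of `G` as a natural number. -/
noncomputable def chi {V : Type*} (G : SimpleGraph V) : ℕ := G.chromaticNumber.toNat

/-- The independence number of `G`: the largest size of a set of pairwise
non-adjacent vertices. -/
noncomputable def indepNum {V : Type*} (G : SimpleGraph V) : ℕ :=
  sSup {n | ∃ s : Finset V, s.card = n ∧ ∀ u ∈ s, ∀ v ∈ s, u ≠ v → ¬ G.Adj u v}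

/-- The join `G + H` of two graphs: all edges of `G` and `H` together with all
edges between the two vertex sets. -/
def SimpleGraph.join {α β : Type*} (G : SimpleGraph α) (H : SimpleGraph β) :
    SimpleGraph (α ⊕ β) where
  Adj x y := match x, y with
    | Sum.inl a, Sum.inl b => G.Adj a b
    | Sum.inr a, Sum.inr b => H.Adj a b
    | Sum.inl _, Sum.inr _ => True
    | Sum.inr _, Sum.inl _ => True
  symm := ⟨by rintro (a | a) (b | b) h <;> first | trivial | exact G.symm.symm _ _ h | exact H.symm.symm _ _ h⟩
  loopless := ⟨by rintro (a | a) h <;> first | exact G.loopless.irrefl a h | exact H.loopless.irrefl a h⟩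

/-!
If `G` has an independent set of three vertices, deleting it lowers `χ` by at most one and does
not raise `ω`; this is the induction on `K` in `ω + K ≤ χ → χ + 2K ≤ |V|` (`K ≤ 3`).

Otherwise `α(G) ≤ 2`. Take a maximum pairing `P` of `G`, i.e. a maximum matching of `Gᶜ`.
Giving both vertices of each pair one colour shows `χ ≤ |V| - |P|`, and by maximality the
uncovered vertices form a clique `U` with `|U| = |V| - 2|P|`. Exchanging pairs shows that every
pair has an endpoint complete to `U`; when `|P| ≥ 1, 3, 5` these endpoints (together with
Ramsey's `R(3, 3) = 6` in the last case) extend `U` by `1, 2, 3` vertices to a larger clique.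
Comparing with `ω + K ≤ χ ≤ |V| - |P|` forces `|P| ≥ 2K`.
-/

open Finset

namespace SimpleGraph

section Chromatic

variable {V : Type*} {G : SimpleGraph V}

lemma chi_le_of_colorable {n : ℕ} (h : G.Colorable n) : chi G ≤ n :=
  ENat.toNat_le_of_le_natCast h.chromaticNumber_le

lemma colorable_chi [Finite V] (G : SimpleGraph V) : G.Colorable (chi G) :=
  G.colorable_chromaticNumber_of_fintype

lemma chi_le_card [Fintype V] (G : SimpleGraph V) : chi G ≤ Fintype.card V :=
  chi_le_of_colorable G.colorable_of_fintype

lemma Colorable.succ_of_induce_compl {s : Set V} (hs : G.IsIndepSet s) {n : ℕ}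
    (h : (G.induce sᶜ).Colorable n) : G.Colorable (n + 1) := by
  classical
  obtain ⟨c⟩ := h
  refine ⟨Coloring.mk (fun v => if hv : v ∈ s then Fin.last n else (c ⟨v, hv⟩).castSucc) ?_⟩
  intro v w hvw
  by_cases hv : v ∈ s <;> by_cases hw : w ∈ s <;> simp only [hv, hw, dite_true, dite_false]
  · exact absurd hvw (hs hv hw (G.ne_of_adj hvw))
  · exact (Fin.castSucc_lt_last _).ne'
  · exact (Fin.castSucc_lt_last _).ne
  · exact fun h => c.valid (v := ⟨v, hv⟩) (w := ⟨w, hw⟩) hvw (Fin.castSucc_injective _ h)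

lemma chi_le_chi_induce_compl_add_one [Finite V] {s : Set V} (hs : G.IsIndepSet s) :
    chi G ≤ chi (G.induce sᶜ) + 1 :=
  chi_le_of_colorable ((colorable_chi _).succ_of_induce_compl hs)

end Chromatic

section Cliques

variable {V : Type*} {G : SimpleGraph V} {x y z : V}

lemma IndepSetFree.adj_of_not_adj (hα : G.IndepSetFree 3) (hxy : x ≠ y) (hxz : x ≠ z)
    (hyz : y ≠ z) (h₁ : ¬G.Adj x y) (h₂ : ¬G.Adj x z) : G.Adj y z := by
  classical
  by_contra h₃
  apply hα {x, y, z}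
  rw [← isNClique_compl, is3Clique_triple_iff]
  simp [*]

lemma CliqueFreeOn.not_adj {s : Set V} (hs : G.CliqueFreeOn s 3) (hx : x ∈ s) (hy : y ∈ s)
    (hz : z ∈ s) (hxy : G.Adj x y) (hxz : G.Adj x z) : ¬G.Adj y z := by
  classical
  intro hyz
  apply hs (t := {x, y, z}) (by simp [Set.insert_subset_iff, *])
  exact is3Clique_triple_iff.2 ⟨hxy, hxz, hyz⟩

lemma card_add_card_le_cliqueNum [Finite V] {A B : Finset V} (hA : G.IsClique (A : Set V))
    (hB : G.IsClique (B : Set V)) (hAB : ∀ a ∈ A, ∀ b ∈ B, G.Adj a b) :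
    #A + #B ≤ G.cliqueNum := by
  classical
  have hdisj : Disjoint A B := Finset.disjoint_left.2 fun a ha hb => G.irrefl (hAB a ha a hb)
  rw [← card_union_of_disjoint hdisj]
  refine IsClique.card_le_cliqueNum (tc := ?_)
  rw [coe_union, IsClique, Set.pairwise_union]
  refine ⟨hA, hB, fun a ha b hb _ => ?_⟩
  exact ⟨hAB a ha b hb, (hAB a ha b hb).symm⟩

/-- Ramsey's `R(3, 3) = 6`. -/
lemma IndepSetFree.exists_isNClique_three_subset (hα : G.IndepSetFree 3)
    {W : Finset V} (hW : 6 ≤ #W) : ∃ t ⊆ W, G.IsNClique 3 t := by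
  classical
  obtain ⟨x, hx⟩ : W.Nonempty := card_pos.1 (by omega)
  have hsplit := card_filter_add_card_filter_not (s := W.erase x) (G.Adj x)
  rw [card_erase_of_mem hx] at hsplit
  have triangle : ∀ {a b c}, a ∈ W → b ∈ W → c ∈ W → G.Adj a b → G.Adj a c → G.Adj b c →
      ∃ t ⊆ W, G.IsNClique 3 t := fun ha hb hc hab hac hbc =>
    ⟨{_, _, _}, by simp [insert_subset_iff, *], is3Clique_triple_iff.2 ⟨hab, hac, hbc⟩⟩
  rcases (show 2 < #((W.erase x).filter (G.Adj x)) ∨ 2 < #((W.erase x).filter (¬G.Adj x ·))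
    by omega) with h | h <;>
  obtain ⟨a, ha, b, hb, c, hc, hab, hac, hbc⟩ := two_lt_card.1 h <;>
  simp only [mem_filter, mem_erase] at ha hb hc
  · by_cases h₁ : G.Adj a b
    · exact triangle hx ha.1.2 hb.1.2 ha.2 hb.2 h₁
    by_cases h₂ : G.Adj a c
    · exact triangle hx ha.1.2 hc.1.2 ha.2 hc.2 h₂
    exact triangle hx hb.1.2 hc.1.2 hb.2 hc.2 (hα.adj_of_not_adj hab hac hbc h₁ h₂)
  · have adj : ∀ {b c}, b ≠ x → c ≠ x → b ≠ c → ¬G.Adj x b → ¬G.Adj x c → G.Adj b c :=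
      fun hb hc hbc => hα.adj_of_not_adj (Ne.symm hb) (Ne.symm hc) hbc
    exact triangle ha.1.2 hb.1.2 hc.1.2 (adj ha.1.1 hb.1.1 hab ha.2 hb.2)
      (adj ha.1.1 hc.1.1 hac ha.2 hc.2) (adj hb.1.1 hc.1.1 hbc hb.2 hc.2)

lemma IndepSetFree.exists_not_adj_not_adj (hα : G.IndepSetFree 3)
    {B : Finset V} (hB : G.CliqueFreeOn B 3) (hcard : #B = 5) (hx : x ∈ B) (hy : y ∈ B)
    (hxy : G.Adj x y) : ∃ z ∈ B, ¬G.Adj x z ∧ ¬G.Adj y z := by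
  classical
  by_contra! h
  -- two neighbours `a, b` of `v` would form an independent triple with `w`
  have fan : ∀ {v w a b}, v ∈ B → w ∈ B → a ∈ B → b ∈ B → G.Adj v w → a ≠ b → a ≠ w →
      b ≠ w → G.Adj v a → G.Adj v b → False := fun hv hw ha hb hvw hab haw hbw hva hvb =>
    hB.not_adj hv hb hw hvb hvw <| hα.adj_of_not_adj hab haw hbw
      (hB.not_adj hv ha hb hva hvb) (hB.not_adj hv ha hw hva hvw)
  set C := (B.erase x).erase y
  have hsplit := card_filter_add_card_filter_not (s := C) (G.Adj x)
  rw [card_erase_of_mem (mem_erase.2 ⟨hxy.ne.symm, hy⟩), card_erase_of_mem hx, hcard] at hsplit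
  rcases (show 1 < #(C.filter (G.Adj x)) ∨ 1 < #(C.filter (¬G.Adj x ·)) by omega)
    with hC | hC <;>
  obtain ⟨a, ha, b, hb, hab⟩ := one_lt_card.1 hC <;>
  simp only [C, mem_filter, mem_erase] at ha hb
  · exact fan hx hy ha.1.2.2 hb.1.2.2 hxy hab ha.1.1 hb.1.1 ha.2 hb.2
  · exact fan hy hx ha.1.2.2 hb.1.2.2 hxy.symm hab ha.1.2.1 hb.1.2.1
      (h a ha.1.2.2 ha.2) (h b hb.1.2.2 hb.2)

end Cliques

section Pairing

variable {V : Type*} [DecidableEq V] {H : SimpleGraph V} {P Q N R : Finset (V × V)}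
  {p q : V × V} {x y : V}

def pairVerts (P : Finset (V × V)) : Finset V := P.biUnion fun p => {p.1, p.2}

lemma mem_pairVerts : x ∈ pairVerts P ↔ ∃ p ∈ P, x = p.1 ∨ x = p.2 := by
  simp [pairVerts]

lemma fst_mem_pairVerts (hp : p ∈ P) : p.1 ∈ pairVerts P := mem_pairVerts.2 ⟨p, hp, .inl rfl⟩

lemma snd_mem_pairVerts (hp : p ∈ P) : p.2 ∈ pairVerts P := mem_pairVerts.2 ⟨p, hp, .inr rfl⟩

lemma pair_subset_pairVerts (hp : p ∈ P) : {p.1, p.2} ⊆ pairVerts P :=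
  subset_biUnion_of_mem (fun p : V × V => ({p.1, p.2} : Finset V)) hp

lemma pairVerts_mono (h : Q ⊆ P) : pairVerts Q ⊆ pairVerts P :=
  biUnion_subset_biUnion_of_subset_left _ h

@[simp] lemma pairVerts_empty : pairVerts (∅ : Finset (V × V)) = ∅ := rfl

@[simp] lemma pairVerts_singleton : pairVerts {p} = {p.1, p.2} := singleton_biUnion

@[simp] lemma pairVerts_insert : pairVerts (insert p P) = {p.1, p.2} ∪ pairVerts P :=
  biUnion_insert

structure IsPairing (H : SimpleGraph V) (P : Finset (V × V)) : Prop where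
  adj : ∀ p ∈ P, H.Adj p.1 p.2
  pairwiseDisjoint : (P : Set (V × V)).PairwiseDisjoint fun p => ({p.1, p.2} : Finset V)

lemma isPairing_empty : IsPairing H ∅ := ⟨by simp, by simp⟩

namespace IsPairing

lemma eq_of_mem (hP : IsPairing H P) (hp : p ∈ P) (hq : q ∈ P) (hxp : x = p.1 ∨ x = p.2)
    (hxq : x = q.1 ∨ x = q.2) : p = q := by
  by_contra hpq
  exact Finset.disjoint_left.1 (hP.pairwiseDisjoint hp hq hpq) (by simpa using hxp)
    (by simpa using hxq)

lemma ne_of_ne (hP : IsPairing H P) (hp : p ∈ P) (hq : q ∈ P) (hpq : p ≠ q) :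
    p.1 ≠ q.1 ∧ p.1 ≠ q.2 ∧ p.2 ≠ q.1 ∧ p.2 ≠ q.2 := by
  refine ⟨fun h => hpq ?_, fun h => hpq ?_, fun h => hpq ?_, fun h => hpq ?_⟩
  exacts [hP.eq_of_mem hp hq (.inl rfl) (.inl h), hP.eq_of_mem hp hq (.inl rfl) (.inr h),
    hP.eq_of_mem hp hq (.inr rfl) (.inl h), hP.eq_of_mem hp hq (.inr rfl) (.inr h)]

lemma card_pairVerts (hP : IsPairing H P) : #(pairVerts P) = 2 * #P := by
  rw [pairVerts, card_biUnion hP.pairwiseDisjoint,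
    sum_const_nat fun p hp => card_pair (hP.adj p hp).ne, mul_comm]

lemma two_mul_card_le [Fintype V] (hP : IsPairing H P) : 2 * #P ≤ Fintype.card V :=
  hP.card_pairVerts ▸ card_le_univ _

lemma subset (hP : IsPairing H P) (h : Q ⊆ P) : IsPairing H Q :=
  ⟨fun p hp => hP.adj p (h hp), hP.pairwiseDisjoint.subset (coe_subset.2 h)⟩

lemma union (hP : IsPairing H P) (hQ : IsPairing H Q)
    (h : Disjoint (pairVerts P) (pairVerts Q)) : IsPairing H (P ∪ Q) := by
  refine ⟨fun p hp => (mem_union.1 hp).elim (hP.adj p) (hQ.adj p), ?_⟩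
  rw [coe_union, Set.pairwiseDisjoint_union]
  refine ⟨hP.pairwiseDisjoint, hQ.pairwiseDisjoint, fun p hp q hq _ => ?_⟩
  exact h.mono (pair_subset_pairVerts hp) (pair_subset_pairVerts hq)

lemma insert (hP : IsPairing H P) (hxy : H.Adj x y) (hx : x ∉ pairVerts P)
    (hy : y ∉ pairVerts P) : IsPairing H (insert (x, y) P) := by
  rw [← singleton_union]
  refine IsPairing.union ⟨by simpa using hxy, by simp⟩ hP ?_
  simp [hx, hy]

lemma disjoint_pairVerts_sdiff (hP : IsPairing H P) (hR : R ⊆ P) :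
    Disjoint (pairVerts R) (pairVerts (P \ R)) := by
  refine Finset.disjoint_left.2 fun v hv hv' => ?_
  obtain ⟨p, hp, hvp⟩ := mem_pairVerts.1 hv
  obtain ⟨q, hq, hvq⟩ := mem_pairVerts.1 hv'
  exact (mem_sdiff.1 hq).2 (hP.eq_of_mem (hR hp) (mem_sdiff.1 hq).1 hvp hvq ▸ hp)

lemma exists_orient (hP : IsPairing H P) (good : V → Prop)
    (h : ∀ p ∈ P, good p.1 ∨ good p.2) :
    ∃ P', IsPairing H P' ∧ pairVerts P' = pairVerts P ∧ #P' = #P ∧ ∀ p ∈ P', good p.2 := by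
  classical
  let orient : V × V → V × V := fun p => if good p.2 then p else p.swap
  have ends : ∀ p, ({(orient p).1, (orient p).2} : Finset V) = {p.1, p.2} := fun p => by
    by_cases hp : good p.2 <;> simp [orient, hp, pair_comm]
  refine ⟨P.image orient, ⟨?_, ?_⟩, ?_, ?_, ?_⟩
  · simp only [mem_image, forall_exists_index, and_imp]
    rintro _ p hp rfl
    by_cases hg : good p.2
    · simpa [orient, hg] using hP.adj p hp
    · simpa [orient, hg] using (hP.adj p hp).symm
  · rw [coe_image]
    exact hP.pairwiseDisjoint.image_of_le fun p => (ends p).le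
  · simp only [pairVerts, image_biUnion, ends]
  · refine card_image_of_injOn fun p hp q hq hpq =>
      hP.eq_of_mem hp hq (x := p.1) (.inl rfl) ?_
    have : p.1 ∈ ({q.1, q.2} : Finset V) := by
      rw [← ends q, ← show orient p = orient q from hpq, ends p]; simp
    simpa using this
  · simp only [mem_image, forall_exists_index, and_imp]
    rintro _ p hp rfl
    by_cases hg : good p.2
    · simp [orient, hg]
    · simpa [orient, hg] using (h p hp).resolve_right hg

end IsPairing

structure IsMaximumPairing (H : SimpleGraph V) (P : Finset (V × V)) : Prop where
  isPairing : IsPairing H P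
  card_le : ∀ Q, IsPairing H Q → #Q ≤ #P

lemma exists_isMaximumPairing [Fintype V] (H : SimpleGraph V) : ∃ P, IsMaximumPairing H P := by
  classical
  obtain ⟨P, hP, hmax⟩ := exists_max_image (univ.filter (IsPairing H)) card
    ⟨∅, mem_filter.2 ⟨mem_univ _, by simp, by simp⟩⟩
  exact ⟨P, (mem_filter.1 hP).2, fun Q hQ => hmax Q (mem_filter.2 ⟨mem_univ _, hQ⟩)⟩

section Uncovered

variable [Fintype V]

def uncovered (P : Finset (V × V)) : Finset V := (pairVerts P)ᶜ

lemma mem_uncovered : x ∈ uncovered P ↔ x ∉ pairVerts P := mem_compl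

lemma ne_of_mem_uncovered {u : V} (hu : u ∈ uncovered P) (hp : p ∈ P) : u ≠ p.1 ∧ u ≠ p.2 :=
  ⟨fun h => mem_uncovered.1 hu (h ▸ fst_mem_pairVerts hp),
    fun h => mem_uncovered.1 hu (h ▸ snd_mem_pairVerts hp)⟩

lemma card_uncovered (hP : IsPairing H P) : #(uncovered P) = Fintype.card V - 2 * #P := by
  rw [uncovered, card_compl, hP.card_pairVerts]

lemma IsMaximumPairing.card_le_of_exchange (hP : IsMaximumPairing H P) (hR : R ⊆ P)
    (hN : IsPairing H N) (hNR : pairVerts N ⊆ pairVerts R ∪ uncovered P) : #N ≤ #R := by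
  have hdisj : Disjoint (pairVerts (P \ R)) (pairVerts N) := by
    refine Finset.disjoint_right.2 fun v hv hv' => ?_
    rcases mem_union.1 (hNR hv) with h | h
    · exact Finset.disjoint_left.1 (hP.isPairing.disjoint_pairVerts_sdiff hR) h hv'
    · exact mem_uncovered.1 h (pairVerts_mono sdiff_subset hv')
  have hcard : #((P \ R) ∪ N) = #P - #R + #N := by
    rw [card_union_of_disjoint (Finset.disjoint_left.2 fun p hp hp' =>
      Finset.disjoint_left.1 hdisj (fst_mem_pairVerts hp) (fst_mem_pairVerts hp')),
      card_sdiff_of_subset hR]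
  have := hP.card_le _ ((hP.isPairing.subset sdiff_subset).union hN hdisj)
  have := card_le_card hR
  omega

end Uncovered

end Pairing

section ComplementPairing

variable {V : Type*} [DecidableEq V] [Fintype V] {G : SimpleGraph V} {P S : Finset (V × V)}
  {p q : V × V}

lemma IsPairing.colorable (hP : IsPairing Gᶜ P) : G.Colorable (Fintype.card V - #P) := by
  set T := P.image Prod.snd
  have hT : #T = #P := card_image_of_injOn fun p hp q hq h =>
    hP.eq_of_mem hp hq (x := p.2) (.inr rfl) (.inr h)
  -- each second endpoint takes the colour of its partner
  have key : ∀ v, ∃ c ∉ T, c = v ∨ (c, v) ∈ P := by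
    intro v
    by_cases hv : v ∈ T
    · obtain ⟨p, hp, rfl⟩ := mem_image.1 hv
      refine ⟨p.1, fun h => ?_, .inr hp⟩
      obtain ⟨q, hq, hqp⟩ := mem_image.1 h
      obtain rfl := hP.eq_of_mem hp hq (x := p.1) (.inl rfl) (.inr hqp.symm)
      exact (hP.adj p hp).ne hqp.symm
    · exact ⟨v, hv, .inl rfl⟩
  choose c hcT hc using key
  have hcol : G.Colorable (Fintype.card ↥(Tᶜ)) := by
    refine (Coloring.mk (fun v => (⟨c v, mem_compl.2 (hcT v)⟩ : ↥(Tᶜ))) ?_).colorable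
    intro v w hvw h
    replace h : c v = c w := congrArg Subtype.val h
    rcases hc v with hv | hv <;> rcases hc w with hw | hw
    · exact G.ne_of_adj hvw (hv ▸ hw ▸ h)
    · exact ((G.compl_adj _ _).1 (hP.adj _ hw)).2 (by rwa [← h, hv])
    · exact ((G.compl_adj _ _).1 (hP.adj _ hv)).2 (by rw [h, hw]; exact hvw.symm)
    · exact G.ne_of_adj hvw (congrArg Prod.snd (hP.eq_of_mem hv hw (x := c v) (.inl rfl) (.inl h)))
  rwa [Fintype.card_coe, card_compl, hT] at hcol

lemma IsPairing.chi_add_card_le (hP : IsPairing Gᶜ P) : chi G + #P ≤ Fintype.card V := by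
  have := chi_le_of_colorable hP.colorable
  have := hP.two_mul_card_le
  omega

namespace IsMaximumPairing

lemma isClique_uncovered (hP : IsMaximumPairing Gᶜ P) : G.IsClique (uncovered P : Set V) := by
  intro u hu w hw huw
  rw [mem_coe] at hu hw
  by_contra h
  have := hP.card_le_of_exchange (empty_subset P)
    (isPairing_empty.insert ((G.compl_adj _ _).2 ⟨huw, h⟩) (by simp) (by simp))
    (by simp [insert_subset_iff, hu, hw])
  simp at this

lemma forall_adj_fst_or_forall_adj_snd (hα : G.IndepSetFree 3) (hP : IsMaximumPairing Gᶜ P)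
    (hp : p ∈ P) : (∀ u ∈ uncovered P, G.Adj p.1 u) ∨ ∀ u ∈ uncovered P, G.Adj p.2 u := by
  by_contra! h
  obtain ⟨⟨u, hu, hpu⟩, ⟨w, hw, hpw⟩⟩ := h
  obtain ⟨hp12, hpn⟩ := (G.compl_adj _ _).1 (hP.isPairing.adj p hp)
  obtain ⟨hu1, hu2⟩ := ne_of_mem_uncovered hu hp
  obtain ⟨hw1, hw2⟩ := ne_of_mem_uncovered hw hp
  by_cases huw : u = w
  · subst huw
    exact hpw (hα.adj_of_not_adj hp12 hu1.symm hu2.symm hpn hpu)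
  -- exchange `p` for `(p.1, u)` and `(p.2, w)`
  have := hP.card_le_of_exchange (singleton_subset_iff.2 hp)
    ((isPairing_empty.insert ((G.compl_adj _ _).2 ⟨hw2.symm, hpw⟩) (by simp) (by simp)).insert
      ((G.compl_adj _ _).2 ⟨hu1.symm, hpu⟩) (by simp [hp12, hw1.symm]) (by simp [hu2, huw]))
    (by simp [insert_subset_iff, hu, hw])
  simp [hp12] at this

lemma eq_of_not_adj_snd (hP : IsMaximumPairing Gᶜ P) (hp : p ∈ P) (hq : q ∈ P) (hpq : p ≠ q)
    (hb : ¬G.Adj p.2 q.2) {u w : V} (hu : u ∈ uncovered P) (hw : w ∈ uncovered P)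
    (hpu : ¬G.Adj p.1 u) (hqw : ¬G.Adj q.1 w) : u = w := by
  by_contra huw
  obtain ⟨hp12, -⟩ := (G.compl_adj _ _).1 (hP.isPairing.adj p hp)
  obtain ⟨hq12, -⟩ := (G.compl_adj _ _).1 (hP.isPairing.adj q hq)
  obtain ⟨h11, h12, h21, h22⟩ := hP.isPairing.ne_of_ne hp hq hpq
  obtain ⟨hu1, hu2⟩ := ne_of_mem_uncovered hu hp
  obtain ⟨hu3, hu4⟩ := ne_of_mem_uncovered hu hq
  obtain ⟨hw1, hw2⟩ := ne_of_mem_uncovered hw hp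
  obtain ⟨hw3, hw4⟩ := ne_of_mem_uncovered hw hq
  -- exchange `p, q` for `(p.1, u), (p.2, q.2), (q.1, w)`
  have hN : IsPairing Gᶜ {(p.1, u), (p.2, q.2), (q.1, w)} :=
    ((isPairing_empty.insert ((G.compl_adj _ _).2 ⟨hw3.symm, hqw⟩) (by simp) (by simp)).insert
      ((G.compl_adj _ _).2 ⟨h22, hb⟩) (by simp [h21, hw2.symm])
      (by simp [hq12.symm, hw4.symm])).insert
      ((G.compl_adj _ _).2 ⟨hu1.symm, hpu⟩) (by simp [hp12, h12, h11, hw1.symm])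
      (by simp [hu2, hu4, hu3, huw])
  have := hP.card_le_of_exchange (insert_subset_iff.2 ⟨hp, singleton_subset_iff.2 hq⟩) hN
    (by simp [insert_subset_iff, hu, hw])
  simp [hp12, h11, h21, hpq] at this

lemma card_uncovered_add_one_le_cliqueNum (hP : IsMaximumPairing Gᶜ P)
    (hsnd : ∀ p ∈ P, ∀ u ∈ uncovered P, G.Adj p.2 u) (h : 1 ≤ #P) :
    #(uncovered P) + 1 ≤ G.cliqueNum := by
  obtain ⟨p, hp⟩ := card_pos.1 h
  have := card_add_card_le_cliqueNum (A := {p.2}) (by simp) hP.isClique_uncovered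
    (by simpa using hsnd p hp)
  simpa [add_comm] using this

lemma card_uncovered_add_two_le_cliqueNum (hα : G.IndepSetFree 3) (hP : IsMaximumPairing Gᶜ P)
    (hsnd : ∀ p ∈ P, ∀ u ∈ uncovered P, G.Adj p.2 u) (h : 3 ≤ #P) :
    #(uncovered P) + 2 ≤ G.cliqueNum := by
  obtain ⟨a, ha, b, hb, hab, hadj⟩ : ∃ a ∈ P, ∃ b ∈ P, a ≠ b ∧ G.Adj a.2 b.2 := by
    obtain ⟨p, hp, q, hq, r, hr, hpq, hpr, hqr⟩ := two_lt_card.1 h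
    have hne := fun {a b} (ha : a ∈ P) (hb : b ∈ P) hab =>
      (hP.isPairing.ne_of_ne ha hb hab).2.2.2
    by_contra! h
    exact h q hq r hr hqr <| hα.adj_of_not_adj (hne hp hq hpq) (hne hp hr hpr) (hne hq hr hqr)
      (h p hp q hq hpq) (h p hp r hr hpr)
  have := card_add_card_le_cliqueNum (A := {a.2, b.2})
    (by simpa [isClique_pair] using fun _ => hadj) hP.isClique_uncovered
    (by simpa using ⟨hsnd a ha, hsnd b hb⟩)
  rw [card_pair hadj.ne] at this
  omega

lemma exists_forall_not_adj_fst_iff_eq (hα : G.IndepSetFree 3) (hP : IsMaximumPairing Gᶜ P)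
    (hSP : S ⊆ P) (hS : #S = 5) (hB : G.CliqueFreeOn (S.image Prod.snd : Set V) 3)
    (ha : ∀ p ∈ S, ∃ u ∈ uncovered P, ¬G.Adj p.1 u) :
    ∃ u₀ ∈ uncovered P, ∀ p ∈ S, ∀ u ∈ uncovered P, ¬G.Adj p.1 u ↔ u = u₀ := by
  have hBcard : #(S.image Prod.snd) = 5 := by
    rw [card_image_of_injOn fun p hp q hq h =>
      hP.isPairing.eq_of_mem (hSP hp) (hSP hq) (x := p.2) (.inr rfl) (.inr h), hS]
  have hne : ∀ p ∈ S, ∀ q ∈ S, p ≠ q → ∀ u ∈ uncovered P, ∀ w ∈ uncovered P,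
      ¬G.Adj p.1 u → ¬G.Adj q.1 w → u = w := by
    intro p hp q hq hpq u hu w hw hpu hqw
    by_cases hb : G.Adj p.2 q.2
    · -- pass through a pair whose second endpoint is adjacent to neither `p.2` nor `q.2`
      obtain ⟨z, hz, hpz, hqz⟩ := hα.exists_not_adj_not_adj hB hBcard (mem_image_of_mem _ hp)
        (mem_image_of_mem _ hq) hb
      obtain ⟨r, hr, rfl⟩ := mem_image.1 hz
      obtain ⟨d, hd, hrd⟩ := ha r hr
      have hpr : p ≠ r := by rintro rfl; exact hqz hb.symm
      have hrq : r ≠ q := by rintro rfl; exact hpz hb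
      exact (hP.eq_of_not_adj_snd (hSP hp) (hSP hr) hpr hpz hu hd hpu hrd).trans
        (hP.eq_of_not_adj_snd (hSP hr) (hSP hq) hrq (fun h => hqz h.symm) hd hw hrd hqw)
    · exact hP.eq_of_not_adj_snd (hSP hp) (hSP hq) hpq hb hu hw hpu hqw
  have hsame : ∀ p ∈ S, ∀ q ∈ S, ∀ u ∈ uncovered P, ∀ w ∈ uncovered P,
      ¬G.Adj p.1 u → ¬G.Adj q.1 w → u = w := by
    intro p hp q hq u hu w hw hpu hqw
    by_cases hpq : p = q
    · subst hpq
      obtain ⟨r, hr, hrp⟩ := exists_mem_ne (s := S) (by omega) p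
      obtain ⟨d, hd, hrd⟩ := ha r hr
      exact (hne p hp r hr hrp.symm u hu d hd hpu hrd).trans
        (hne p hp r hr hrp.symm w hw d hd hqw hrd).symm
    · exact hne p hp q hq hpq u hu w hw hpu hqw
  obtain ⟨p₀, hp₀⟩ : S.Nonempty := card_pos.1 (by omega)
  obtain ⟨u₀, hu₀, hpu₀⟩ := ha p₀ hp₀
  refine ⟨u₀, hu₀, fun p hp u hu => ⟨fun hpu => hsame p hp p₀ hp₀ u hu u₀ hu₀ hpu hpu₀, ?_⟩⟩
  rintro rfl
  obtain ⟨d, hd, hpd⟩ := ha p hp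
  exact hsame p hp p₀ hp₀ d hd _ hu hpd hpu₀ ▸ hpd

lemma card_uncovered_add_card_le_cliqueNum_add_one (hα : G.IndepSetFree 3)
    (hP : IsMaximumPairing Gᶜ P) (hSP : S ⊆ P) {u₀ : V} (hu₀ : u₀ ∈ uncovered P)
    (h : ∀ p ∈ S, ∀ u ∈ uncovered P, ¬G.Adj p.1 u ↔ u = u₀) :
    #(uncovered P) + #S ≤ G.cliqueNum + 1 := by
  have hfst : #(S.image Prod.fst) = #S := card_image_of_injOn fun p hp q hq hpq =>
    hP.isPairing.eq_of_mem (hSP hp) (hSP hq) (x := p.1) (.inl rfl) (.inl hpq)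
  have hA : G.IsClique (S.image Prod.fst : Set V) := by
    simp only [coe_image]
    rintro _ ⟨p, hp, rfl⟩ _ ⟨q, hq, rfl⟩ hpq
    by_contra hn
    have hpu₀ := (ne_of_mem_uncovered hu₀ (hSP hp)).1
    have hqu₀ := (ne_of_mem_uncovered hu₀ (hSP hq)).1
    exact (h q hq u₀ hu₀).2 rfl <|
      hα.adj_of_not_adj hpq hpu₀.symm hqu₀.symm hn ((h p hp u₀ hu₀).2 rfl)
  have := card_add_card_le_cliqueNum hA (hP.isClique_uncovered.subset (by simp))
    (B := (uncovered P).erase u₀) fun a ha u hu => by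
      obtain ⟨p, hp, rfl⟩ := mem_image.1 ha
      by_contra hn
      exact (mem_erase.1 hu).1 ((h p hp u (mem_erase.1 hu).2).1 hn)
  rw [hfst, card_erase_of_mem hu₀] at this
  have := card_pos.2 ⟨u₀, hu₀⟩
  omega

lemma card_uncovered_add_three_le_cliqueNum (hα : G.IndepSetFree 3) (hP : IsMaximumPairing Gᶜ P)
    (hsnd : ∀ p ∈ P, ∀ u ∈ uncovered P, G.Adj p.2 u) (h : 5 ≤ #P) :
    #(uncovered P) + 3 ≤ G.cliqueNum := by
  obtain ⟨S, hSP, hS⟩ := exists_subset_card_eq h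
  have of_triangle : ∀ t : Finset V, G.IsNClique 3 t →
      (∀ x ∈ t, ∀ u ∈ uncovered P, G.Adj x u) → #(uncovered P) + 3 ≤ G.cliqueNum :=
    fun t ht htU => by
    have := card_add_card_le_cliqueNum ht.isClique hP.isClique_uncovered htU
    rw [ht.card_eq] at this
    omega
  have hsndS : ∀ x ∈ S.image Prod.snd, ∀ u ∈ uncovered P, G.Adj x u := by
    simp only [mem_image, forall_exists_index, and_imp]
    rintro _ p hp rfl
    exact hsnd p (hSP hp)
  by_cases hB : ∃ t ⊆ S.image Prod.snd, G.IsNClique 3 t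
  · obtain ⟨t, htB, ht⟩ := hB
    exact of_triangle t ht fun x hx => hsndS x (htB hx)
  by_cases ha : ∃ p ∈ S, ∀ u ∈ uncovered P, G.Adj p.1 u
  · obtain ⟨p, hp, hpU⟩ := ha
    have hcard : 6 ≤ #(insert p.1 (S.image Prod.snd)) := by
      rw [card_insert_of_notMem, card_image_of_injOn fun p hp q hq h =>
        hP.isPairing.eq_of_mem (hSP hp) (hSP hq) (x := p.2) (.inr rfl) (.inr h), hS]
      simp only [mem_image, not_exists, not_and]
      intro q hq hqp
      obtain rfl :=
        hP.isPairing.eq_of_mem (hSP hq) (hSP hp) (x := p.1) (.inr hqp.symm) (.inl rfl)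
      exact (hP.isPairing.adj q (hSP hq)).ne hqp.symm
    obtain ⟨t, htW, ht⟩ := hα.exists_isNClique_three_subset hcard
    refine of_triangle t ht fun x hx => ?_
    rcases mem_insert.1 (htW hx) with rfl | hx
    exacts [hpU, hsndS x hx]
  push Not at hB ha
  obtain ⟨u₀, hu₀, hS₀⟩ := hP.exists_forall_not_adj_fst_iff_eq hα hSP hS
    (fun t ht => hB t (by exact_mod_cast ht)) ha
  have := hP.card_uncovered_add_card_le_cliqueNum_add_one hα hSP hu₀ hS₀
  omega

lemma card_uncovered_add_le_cliqueNum (hα : G.IndepSetFree 3) (hP : IsMaximumPairing Gᶜ P)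
    (hsnd : ∀ p ∈ P, ∀ u ∈ uncovered P, G.Adj p.2 u) (h : #P ≤ 5) :
    #(uncovered P) + (#P + 1) / 2 ≤ G.cliqueNum := by
  obtain h | h | h | h : #P = 0 ∨ (1 ≤ #P ∧ #P < 3) ∨ (3 ≤ #P ∧ #P < 5) ∨ 5 ≤ #P := by omega
  · simpa [h] using hP.isClique_uncovered.card_le_cliqueNum
  · have := hP.card_uncovered_add_one_le_cliqueNum hsnd h.1
    omega
  · have := hP.card_uncovered_add_two_le_cliqueNum hα hsnd h.1
    omega
  · have := hP.card_uncovered_add_three_le_cliqueNum hα hsnd h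
    omega

end IsMaximumPairing

lemma exists_isMaximumPairing_forall_adj_snd (hα : G.IndepSetFree 3) :
    ∃ P, IsMaximumPairing Gᶜ P ∧ ∀ p ∈ P, ∀ u ∈ uncovered P, G.Adj p.2 u := by
  obtain ⟨P, hP⟩ := exists_isMaximumPairing Gᶜ
  obtain ⟨P', hP', hverts, hcard, hgood⟩ := hP.isPairing.exists_orient
    (fun v => ∀ u ∈ uncovered P, G.Adj v u) fun p hp => hP.forall_adj_fst_or_forall_adj_snd hα hp
  refine ⟨P', ⟨hP', fun Q hQ => hcard ▸ hP.card_le Q hQ⟩, ?_⟩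
  simpa only [uncovered, hverts] using hgood

end ComplementPairing

lemma chi_add_two_mul_le_card_of_indepSetFree {V : Type*} [Fintype V] {G : SimpleGraph V}
    (hα : G.IndepSetFree 3) {K : ℕ} (hK : K ≤ 3)
    (h : G.cliqueNum + K ≤ chi G) : chi G + 2 * K ≤ Fintype.card V := by
  classical
  obtain ⟨P, hP, hsnd⟩ := exists_isMaximumPairing_forall_adj_snd hα
  have hχ := hP.isPairing.chi_add_card_le
  have hn := hP.isPairing.two_mul_card_le
  by_contra hlt
  have hω := hP.card_uncovered_add_le_cliqueNum hα hsnd (by omega)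
  rw [card_uncovered hP.isPairing] at hω
  omega

theorem chi_add_two_mul_le_card {V : Type} [Fintype V] (G : SimpleGraph V) {K : ℕ}
    (hK : K ≤ 3) (h : G.cliqueNum + K ≤ chi G) : chi G + 2 * K ≤ Fintype.card V := by
  induction K generalizing V with
  | zero => simpa using chi_le_card G
  | succ K ih =>
    classical
    by_cases hα : G.IndepSetFree 3
    · exact chi_add_two_mul_le_card_of_indepSetFree hα hK h
    obtain ⟨t, ht⟩ : ∃ t, G.IsNIndepSet 3 t := by simpa [IndepSetFree] using hα
    have hχ := chi_le_chi_induce_compl_add_one ht.isIndepSet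
    have hω := cliqueNum_induce_le (G := G) (t : Set V)ᶜ
    have hcard : Fintype.card ↥(t : Set V)ᶜ = Fintype.card V - 3 := by
      simp [← coe_compl, ht.card_eq]
    have ht3 : 3 ≤ Fintype.card V := ht.card_eq ▸ card_le_univ t
    have := ih (G.induce (t : Set V)ᶜ) (by omega) (by omega)
    omega

end SimpleGraph

theorem statement_1 {V : Type} [Fintype V] (G : SimpleGraph V)
    (hf : G.cliqueNum + 3 ≤ chi G) :
    chi G + 6 ≤ Fintype.card V :=
  G.chi_add_two_mul_le_card le_rfl hf
end

section
/- Let a₁,…,a_r be integers with a_i ≥ 2. If a finite simple graph G satisfies G →e (a₁,…,a_r), then χ(G) ≥ R(a₁,…,a_r). -/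
open SimpleGraph

/-- `Arrows G a` means `G →e (a 0, …, a (r-1))`: for every `r`-coloring of the
edges of `G` there are an index `i` and an `(a i)`-clique all of whose edges
get color `i`. -/
def Arrows {V : Type*} (G : SimpleGraph V) {r : ℕ} (a : Fin r → ℕ) : Prop :=
  ∀ C : Sym2 V → Fin r, ∃ i : Fin r, ∃ s : Finset V,
    G.IsNClique (a i) s ∧ ∀ u ∈ s, ∀ v ∈ s, G.Adj u v → C s(u, v) = i

/-- The Ramsey number `R(a 0, …, a (r-1))`. -/
noncomputable def ramseyNumber {r : ℕ} (a : Fin r → ℕ) : ℕ :=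
  sInf {n | Arrows (⊤ : SimpleGraph (Fin n)) a}

/-- The edge Folkman number `F_e(a 0, …, a (r-1); q)`. -/
noncomputable def folkmanNumber {r : ℕ} (a : Fin r → ℕ) (q : ℕ) : ℕ :=
  sInf {n | ∃ G : SimpleGraph (Fin n), Arrows G a ∧ G.cliqueNum < q}

/-! A proper coloring of `G` with `χ(G)` colors is a homomorphism `G →g K_χ(G)`, and the arrow
relation passes forward along homomorphisms: pull an edge coloring back, and note that a
homomorphism is injective on cliques. -/

namespace SimpleGraph

variable {V W : Type*} {G : SimpleGraph V} {H : SimpleGraph W}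

theorem Hom.injOn_of_isClique (f : G →g H) {s : Set V} (hs : G.IsClique s) : s.InjOn f :=
  fun _ hu _ hv hfuv ↦ by_contra fun huv ↦ (f.map_adj (hs hu hv huv)).ne hfuv

theorem IsNClique.image_hom [DecidableEq W] (f : G →g H) {n : ℕ} {s : Finset V}
    (hs : G.IsNClique n s) : H.IsNClique n (s.image f) where
  isClique := by
    rw [Finset.coe_image]
    rintro _ ⟨u, hu, rfl⟩ _ ⟨v, hv, rfl⟩ hne
    exact f.map_adj (hs.isClique hu hv fun h ↦ hne (congrArg f h))
  card_eq := by
    rw [Finset.card_image_of_injOn (f.injOn_of_isClique hs.isClique), hs.card_eq]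

end SimpleGraph

theorem Arrows.of_hom {V W : Type*} {G : SimpleGraph V} {H : SimpleGraph W} {r : ℕ}
    {a : Fin r → ℕ} (hG : Arrows G a) (f : G →g H) : Arrows H a := by
  classical
  intro C
  obtain ⟨i, s, hs, hmono⟩ := hG (C ∘ Sym2.map f)
  refine ⟨i, s.image f, hs.image_hom f, ?_⟩
  simp only [Finset.mem_image]
  rintro _ ⟨u, hu, rfl⟩ _ ⟨v, hv, rfl⟩ hadj
  have huv : u ≠ v := fun h ↦ hadj.ne (congrArg f h)
  simpa using hmono u hu v hv (hs.isClique hu hv huv)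

theorem statement_19_general {V : Type} [Fintype V] (G : SimpleGraph V)
    {r : ℕ} (a : Fin r → ℕ)
    (hG : Arrows G a) :
    ramseyNumber a ≤ chi G := by
  obtain ⟨c⟩ : G.Colorable (chi G) := G.colorable_chromaticNumber_of_fintype
  exact Nat.sInf_le (hG.of_hom c)

theorem statement_19 {V : Type} [Fintype V] (G : SimpleGraph V)
    {r : ℕ} (a : Fin r → ℕ) (ha : ∀ i, 2 ≤ a i)
    (hG : Arrows G a) :
    ramseyNumber a ≤ chi G :=
  statement_19_general G a hG
end
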